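/- For real numbers s ≠ t with α = min{s,t} and any real λ, the function θ_{s,t;λ}(x) = (ψ(x+t)−ψ(x+s))/(t−s) − (1+λ(2x+s+t))/(2(x+s)(x+t)) admits, for x > −α, the integral representation θ_{s,t;λ}(x) = (1/2)∫₀^∞ [tanh((t−s)u/2)/((t−s)tanh(u/2)) − λ] (e^{−su} + e^{−tu}) e^{−xu} du. -/

import Mathlib

/-!
For `0 < z, y`, expanding `1 / (1 - e^{-u})` as a geometric series and integrating term by term
gives Gauss's formula
`∫₀^∞ (e^{-zu} - e^{-yu}) / (1 - e^{-u}) du = ∑ₖ (1/(z+k) - 1/(y+k)) = ψ(y) - ψ(z)`,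
where the series telescopes through `ψ(x+1) = ψ(x) + 1/x` because `ψ(y+n) - ψ(z+n) → 0`
(`ψ` is monotone, `log Γ` being convex).
Since `tanh(v/2) = (1 - e^{-v}) / (1 + e^{-v})`, the integrand of the theorem equals
`(e^{-(x+s)u} - e^{-(x+t)u}) coth(u/2) / (t-s) - λ (e^{-(x+s)u} + e^{-(x+t)u})`, and
`coth(u/2) = (1 + e^{-u}) / (1 - e^{-u})` splits the first term into two Gauss kernels,
at `(x+s, x+t)` and at `(x+s+1, x+t+1)`.
-/

noncomputable def psi : ℝ → ℝ := deriv (fun x => Real.log (Real.Gamma x))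

open MeasureTheory Real Set Filter Topology

lemma differentiableAt_log_Gamma {x : ℝ} (hx : 0 < x) :
    DifferentiableAt ℝ (fun x => log (Gamma x)) x :=
  (differentiableAt_Gamma fun m => by linarith [m.cast_nonneg (α := ℝ)]).log
    (Gamma_pos_of_pos hx).ne'

lemma psi_add_one {x : ℝ} (hx : 0 < x) : psi (x + 1) = psi x + x⁻¹ := by
  rw [psi, ← deriv_comp_add_const, ← deriv_log,
    ← deriv_add (differentiableAt_log_Gamma hx) (differentiableAt_log hx.ne')]
  refine EventuallyEq.deriv_eq ?_
  filter_upwards [eventually_gt_nhds hx] with y hy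
  rw [Gamma_add_one hy.ne', log_mul hy.ne' (Gamma_pos_of_pos hy).ne', add_comm]
  rfl

lemma psi_add_nat {x : ℝ} (hx : 0 < x) (n : ℕ) :
    psi (x + n) = psi x + ∑ k ∈ Finset.range n, (x + k)⁻¹ := by
  induction n with
  | zero => simp
  | succ n ih =>
    rw [Finset.sum_range_succ, ← add_assoc, ← ih, Nat.cast_succ, ← add_assoc,
      psi_add_one (by positivity)]

lemma monotoneOn_psi : MonotoneOn psi (Ioi 0) :=
  convexOn_log_Gamma.monotoneOn_deriv fun _ hx => differentiableAt_log_Gamma hx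

lemma tendsto_psi_add_nat_sub_psi_add_nat {z y : ℝ} (hz : 0 < z) (hzy : z ≤ y) :
    Tendsto (fun n : ℕ => psi (y + n) - psi (z + n)) atTop (𝓝 0) := by
  set m := ⌈y - z⌉₊
  have hlower (n : ℕ) : 0 ≤ psi (y + n) - psi (z + n) :=
    sub_nonneg.2 (monotoneOn_psi (by simp only [mem_Ioi]; positivity)
      (by simp only [mem_Ioi]; linarith [n.cast_nonneg (α := ℝ)]) (by linarith))
  -- `ψ(y+n) ≤ ψ(z+n+m)`, and `ψ(z+n+m) - ψ(z+n)` is a sum of `m` terms tending to `0`.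
  have hupper (n : ℕ) : psi (y + n) - psi (z + n) ≤ ∑ k ∈ Finset.range m, (z + n + k)⁻¹ := by
    have hzn : 0 < z + n := by positivity
    have hmono : psi (y + n) ≤ psi (z + n + m) :=
      monotoneOn_psi (by simp only [mem_Ioi]; linarith) (by simp only [mem_Ioi]; positivity)
        (by linarith [Nat.le_ceil (y - z)])
    linarith [psi_add_nat hzn m]
  have hsum : Tendsto (fun n : ℕ => ∑ k ∈ Finset.range m, (z + n + k)⁻¹) atTop (𝓝 0) := by
    simpa using tendsto_finsetSum (Finset.range m) fun k _ =>
      tendsto_inv_atTop_zero.comp <| tendsto_atTop_add_const_right _ (k : ℝ) <|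
        tendsto_atTop_add_const_left _ z tendsto_natCast_atTop_atTop
  exact tendsto_of_tendsto_of_tendsto_of_le_of_le tendsto_const_nhds hsum hlower hupper

lemma hasSum_inv_add_nat_sub_inv_add_nat {z y : ℝ} (hz : 0 < z) (hzy : z ≤ y) :
    HasSum (fun k : ℕ => (z + k)⁻¹ - (y + k)⁻¹) (psi y - psi z) := by
  have hterm (k : ℕ) : 0 ≤ (z + k)⁻¹ - (y + k)⁻¹ :=
    sub_nonneg.2 (inv_anti₀ (by positivity) (by linarith))
  have hpartial (n : ℕ) : ∑ k ∈ Finset.range n, ((z + k)⁻¹ - (y + k)⁻¹)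
      = (psi y - psi z) - (psi (y + n) - psi (z + n)) := by
    rw [Finset.sum_sub_distrib, psi_add_nat hz, psi_add_nat (hz.trans_le hzy)]
    ring
  rw [hasSum_iff_tendsto_nat_of_nonneg hterm]
  simp_rw [hpartial]
  simpa using (tendsto_psi_add_nat_sub_psi_add_nat hz hzy).const_sub (psi y - psi z)

lemma integral_exp_neg_mul_Ioi_zero {b : ℝ} (hb : 0 < b) :
    ∫ u in Ioi (0 : ℝ), exp (-b * u) = b⁻¹ := by
  rw [integral_exp_mul_Ioi (neg_neg_of_pos hb)]
  simp

lemma one_sub_exp_neg_pos {u : ℝ} (hu : 0 < u) : 0 < 1 - exp (-u) :=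
  sub_pos.2 (exp_lt_one_iff.2 (neg_neg_of_pos hu))

lemma exp_sub_exp_div_one_sub_exp_neg_le {z y u : ℝ} (hzy : z ≤ y) (hu : 0 < u) :
    (exp (-z * u) - exp (-y * u)) / (1 - exp (-u)) ≤ (y - z) * ((1 + u) * exp (-z * u)) := by
  have hden : exp (-u) * (1 + u) ≤ 1 := by
    calc exp (-u) * (1 + u) ≤ exp (-u) * exp u := by gcongr; linarith [add_one_le_exp u]
      _ = 1 := by rw [← exp_add, neg_add_cancel, exp_zero]
  have hnum : exp (-z * u) - exp (-y * u) ≤ (y - z) * u * exp (-z * u) := by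
    have hsplit : exp (-y * u) = exp (-z * u) * exp (-((y - z) * u)) := by
      rw [← exp_add]; ring_nf
    rw [hsplit]
    nlinarith [one_sub_le_exp_neg ((y - z) * u), exp_pos (-z * u)]
  rw [div_le_iff₀ (one_sub_exp_neg_pos hu)]
  nlinarith [mul_nonneg (mul_nonneg (sub_nonneg.2 hzy) (exp_pos (-z * u)).le) (sub_nonneg.2 hden)]

lemma integrableOn_exp_sub_exp_div_one_sub_exp_neg {z y : ℝ} (hz : 0 < z) (hy : 0 < y) :
    IntegrableOn (fun u => (exp (-z * u) - exp (-y * u)) / (1 - exp (-u))) (Ioi 0) := by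
  wlog hzy : z ≤ y generalizing z y
  · refine (this hy hz (le_of_not_ge hzy)).neg.congr_fun (fun u _ => ?_) measurableSet_Ioi
    simp only [Pi.neg_apply]
    ring
  have hdom : IntegrableOn (fun u => (y - z) * ((1 + u) * exp (-z * u))) (Ioi 0) := by
    have hmul : IntegrableOn (fun u => u * exp (-z * u)) (Ioi 0) := by
      simpa only [rpow_one] using
        integrableOn_rpow_mul_exp_neg_mul_rpow (s := 1) (p := 1) (by norm_num) one_pos hz
    refine IntegrableOn.congr_fun (((exp_neg_integrableOn_Ioi 0 hz).add hmul).const_mul (y - z))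
      (fun u _ => by simp only [Pi.add_apply]; ring) measurableSet_Ioi
  have hcont : ContinuousOn (fun u => (exp (-z * u) - exp (-y * u)) / (1 - exp (-u))) (Ioi 0) :=
    ContinuousOn.div (by fun_prop) (by fun_prop) fun u hu => (one_sub_exp_neg_pos hu).ne'
  refine hdom.mono' (hcont.aestronglyMeasurable measurableSet_Ioi) ?_
  filter_upwards [ae_restrict_mem measurableSet_Ioi] with u hu
  have hnum : exp (-y * u) ≤ exp (-z * u) := exp_le_exp.2 (by nlinarith [mem_Ioi.1 hu])
  rw [norm_of_nonneg (div_nonneg (sub_nonneg.2 hnum) (one_sub_exp_neg_pos hu).le)]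
  exact exp_sub_exp_div_one_sub_exp_neg_le hzy hu

lemma hasSum_exp_sub_exp {z y u : ℝ} (hu : 0 < u) :
    HasSum (fun k : ℕ => exp (-(z + k) * u) - exp (-(y + k) * u))
      ((exp (-z * u) - exp (-y * u)) / (1 - exp (-u))) := by
  have hexp (w : ℝ) (k : ℕ) : exp (-(w + k) * u) = exp (-w * u) * exp (-u) ^ k := by
    rw [← exp_nat_mul, ← exp_add]; ring_nf
  simp_rw [hexp, ← sub_mul, div_eq_mul_inv]
  exact (hasSum_geometric_of_lt_one (exp_pos _).le (exp_lt_one_iff.2 (neg_neg_of_pos hu))).mul_left _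

lemma integral_exp_sub_exp_div_one_sub_exp_neg {z y : ℝ} (hz : 0 < z) (hy : 0 < y) :
    ∫ u in Ioi (0 : ℝ), (exp (-z * u) - exp (-y * u)) / (1 - exp (-u)) = psi y - psi z := by
  wlog hzy : z ≤ y generalizing z y
  · rw [← neg_sub, ← this hy hz (le_of_not_ge hzy), ← integral_neg]
    simp only [← neg_div, neg_sub]
  set F : ℕ → ℝ → ℝ := fun k u => exp (-(z + k) * u) - exp (-(y + k) * u)
  have hzk (k : ℕ) : 0 < z + k := by positivity
  have hyk (k : ℕ) : 0 < y + k := by positivity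
  have hint (k : ℕ) : IntegrableOn (F k) (Ioi 0) :=
    (exp_neg_integrableOn_Ioi 0 (hzk k)).sub (exp_neg_integrableOn_Ioi 0 (hyk k))
  have hval (k : ℕ) : ∫ u in Ioi (0 : ℝ), F k u = (z + k)⁻¹ - (y + k)⁻¹ := by
    rw [integral_sub (exp_neg_integrableOn_Ioi 0 (hzk k)) (exp_neg_integrableOn_Ioi 0 (hyk k)),
      integral_exp_neg_mul_Ioi_zero (hzk k), integral_exp_neg_mul_Ioi_zero (hyk k)]
  have hnorm (k : ℕ) : ∫ u in Ioi (0 : ℝ), ‖F k u‖ = ∫ u in Ioi (0 : ℝ), F k u :=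
    setIntegral_congr_fun measurableSet_Ioi fun u hu =>
      norm_of_nonneg (sub_nonneg.2 (exp_le_exp.2 (by nlinarith [mem_Ioi.1 hu])))
  have hsum := hasSum_integral_of_summable_integral_norm hint (by
    simp_rw [hnorm, hval]; exact (hasSum_inv_add_nat_sub_inv_add_nat hz hzy).summable)
  rw [setIntegral_congr_fun measurableSet_Ioi fun u hu => (hasSum_exp_sub_exp hu).tsum_eq.symm]
  exact (funext hval ▸ hsum).unique (hasSum_inv_add_nat_sub_inv_add_nat hz hzy)

lemma tanh_half_eq (v : ℝ) : tanh (v / 2) = (1 - exp (-v)) / (1 + exp (-v)) := by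
  have hsq : exp (-v) = exp (-(v / 2)) ^ 2 := by rw [← exp_nat_mul]; ring_nf
  have hinv : exp (v / 2) * exp (-(v / 2)) = 1 := by rw [← exp_add, add_neg_cancel, exp_zero]
  rw [tanh_eq, div_eq_div_iff (by positivity) (by positivity), hsq]
  linear_combination 2 * exp (-(v / 2)) * hinv

lemma tanh_mul_exp_add_exp (s t u : ℝ) :
    tanh ((t - s) * u / 2) * (exp (-s * u) + exp (-t * u)) = exp (-s * u) - exp (-t * u) := by
  have hsplit : exp (-t * u) = exp (-s * u) * exp (-((t - s) * u)) := by
    rw [← exp_add]; ring_nf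
  rw [tanh_half_eq, hsplit]
  field_simp

lemma exp_sub_exp_div_tanh_half (z y u : ℝ) :
    (exp (-z * u) - exp (-y * u)) / tanh (u / 2)
      = (exp (-z * u) - exp (-y * u)) / (1 - exp (-u))
        + (exp (-(z + 1) * u) - exp (-(y + 1) * u)) / (1 - exp (-u)) := by
  have hshift (w : ℝ) : exp (-(w + 1) * u) = exp (-w * u) * exp (-u) := by
    rw [← exp_add]; ring_nf
  rw [tanh_half_eq, div_div_eq_mul_div, hshift, hshift]
  ring

lemma integrableOn_exp_sub_exp_div_tanh_half {z y : ℝ} (hz : 0 < z) (hy : 0 < y) :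
    IntegrableOn (fun u => (exp (-z * u) - exp (-y * u)) / tanh (u / 2)) (Ioi 0) := by
  simp_rw [exp_sub_exp_div_tanh_half]
  exact (integrableOn_exp_sub_exp_div_one_sub_exp_neg hz hy).add
    (integrableOn_exp_sub_exp_div_one_sub_exp_neg (by linarith) (by linarith))

lemma integral_exp_sub_exp_div_tanh_half {z y : ℝ} (hz : 0 < z) (hy : 0 < y) :
    ∫ u in Ioi (0 : ℝ), (exp (-z * u) - exp (-y * u)) / tanh (u / 2)
      = 2 * (psi y - psi z) + y⁻¹ - z⁻¹ := by
  have hz1 : 0 < z + 1 := by linarith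
  have hy1 : 0 < y + 1 := by linarith
  simp_rw [exp_sub_exp_div_tanh_half]
  rw [integral_add (integrableOn_exp_sub_exp_div_one_sub_exp_neg hz hy)
      (integrableOn_exp_sub_exp_div_one_sub_exp_neg hz1 hy1),
    integral_exp_sub_exp_div_one_sub_exp_neg hz hy,
    integral_exp_sub_exp_div_one_sub_exp_neg hz1 hy1, psi_add_one hz, psi_add_one hy]
  ring

lemma theta_integrand_eq (s t lam x u : ℝ) :
    (tanh ((t - s) * u / 2) / ((t - s) * tanh (u / 2)) - lam) *
        (exp (-s * u) + exp (-t * u)) * exp (-x * u)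
      = (t - s)⁻¹ * ((exp (-(x + s) * u) - exp (-(x + t) * u)) / tanh (u / 2))
        - lam * (exp (-(x + s) * u) + exp (-(x + t) * u)) := by
  have hshift (w : ℝ) : exp (-(x + w) * u) = exp (-x * u) * exp (-w * u) := by
    rw [← exp_add]; ring_nf
  rw [hshift, hshift, div_mul_eq_div_div]
  linear_combination (exp (-x * u) / (t - s) / tanh (u / 2)) * tanh_mul_exp_add_exp s t u

theorem theta_integral_rep (s t lam x : ℝ) (hst : s ≠ t) (hx : -min s t < x) :
    (psi (x + t) - psi (x + s)) / (t - s) -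
        (1 + lam * (2 * x + s + t)) / (2 * (x + s) * (x + t)) =
      (1 / 2) * ∫ u in Set.Ioi (0 : ℝ),
        (Real.tanh ((t - s) * u / 2) / ((t - s) * Real.tanh (u / 2)) - lam) *
          (Real.exp (-s * u) + Real.exp (-t * u)) * Real.exp (-x * u) := by
  have hz : 0 < x + s := by linarith [min_le_left s t]
  have hy : 0 < x + t := by linarith [min_le_right s t]
  have hts : t - s ≠ 0 := sub_ne_zero.2 hst.symm
  have hexp : IntegrableOn (fun u => exp (-(x + s) * u) + exp (-(x + t) * u)) (Ioi 0) :=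
    (exp_neg_integrableOn_Ioi 0 hz).add (exp_neg_integrableOn_Ioi 0 hy)
  simp_rw [theta_integrand_eq s t lam x]
  rw [integral_sub ((integrableOn_exp_sub_exp_div_tanh_half hz hy).const_mul _) (hexp.const_mul lam),
    integral_const_mul, integral_const_mul,
    integral_add (exp_neg_integrableOn_Ioi 0 hz) (exp_neg_integrableOn_Ioi 0 hy),
    integral_exp_sub_exp_div_tanh_half hz hy, integral_exp_neg_mul_Ioi_zero hz,
    integral_exp_neg_mul_Ioi_zero hy]
  field_simp
  ring
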